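/- arXiv:2408.09182 — 2 statements merged into one kernel-verified Lean document; each statement's English description precedes it below -/
import Mathlib

section
/- Let R̄ be a nonempty closed convex subset of ℝ^M. Let θ : [0,∞) → ℝ^M be differentiable and r : [0,∞) → ℝ^M be continuous with r(t) ∈ R̄ for all t ≥ 0, and suppose θ'(t) = r(t) − θ(t) for all t ≥ 0. Then for all t ≥ 0, the Euclidean distance from θ(t) to R̄ satisfies dist(θ(t), R̄) ≤ dist(θ(0), R̄) · e^{−t}. -/
/-- Exponential decay of the distance to a closed convex set along the trajectory of the
o.d.e. `θ'(t) = r(t) − θ(t)` when the drift target `r(t)` always lies in the set. -/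
theorem stmt_5 {M : ℕ}
    (R : Set (EuclideanSpace ℝ (Fin M)))
    (hRne : R.Nonempty) (hRclosed : IsClosed R) (hRconvex : Convex ℝ R)
    (θ r : ℝ → EuclideanSpace ℝ (Fin M))
    (hrmem : ∀ t ∈ Set.Ici (0 : ℝ), r t ∈ R)
    (hrcont : ContinuousOn r (Set.Ici (0 : ℝ)))
    (hode : ∀ t ∈ Set.Ici (0 : ℝ),
      HasDerivWithinAt θ (r t - θ t) (Set.Ici (0 : ℝ)) t) :
    ∀ t ∈ Set.Ici (0 : ℝ),
      Metric.infDist (θ t) R ≤ Metric.infDist (θ 0) R * Real.exp (-t) := by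
  intro t ht
  have ht' : (0 : ℝ) ≤ t := ht
  set f : ℝ → ℝ := fun s => Metric.infDist (θ s) R with hfdef
  have hcontθ : ContinuousOn θ (Set.Ici (0 : ℝ)) :=
    fun s hs => (hode s hs).continuousWithinAt
  have hcontf : ContinuousOn f (Set.Icc 0 t) :=
    (Metric.continuous_infDist_pt R).comp_continuousOn
      (hcontθ.mono Set.Icc_subset_Ici_self)
  have hslope : ∀ x ∈ Set.Ico 0 t, ∀ r', (fun s => -f s) x < r' →
      ∃ᶠ z in nhdsWithin x (Set.Ioi x), (z - x)⁻¹ * (f z - f x) < r' := by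
    intro x hx r' hr'
    simp only at hr'
    have hx0 : x ∈ Set.Ici (0 : ℝ) := hx.1
    set c : ℝ := (r' + f x) / 2 with hc
    have hcpos : 0 < c := by
      have : -f x < r' := hr'
      simp only [hc]; linarith
    -- little-o estimate from the derivative
    have hlo := (hasDerivWithinAt_iff_isLittleO.1 (hode x hx0)).def hcpos
    have hsub : Set.Ioi x ⊆ Set.Ici (0 : ℝ) := fun z hz => le_of_lt (lt_of_le_of_lt hx.1 hz)
    have hle : nhdsWithin x (Set.Ioi x) ≤ nhdsWithin x (Set.Ici (0 : ℝ)) :=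
      nhdsWithin_mono x hsub
    have hev1 : ∀ᶠ z in nhdsWithin x (Set.Ioi x),
        ‖θ z - θ x - (z - x) • (r x - θ x)‖ ≤ c * ‖z - x‖ := hle hlo
    have hev2 : ∀ᶠ z in nhdsWithin x (Set.Ioi x), z ∈ Set.Ioi x :=
      self_mem_nhdsWithin
    have hev3 : ∀ᶠ z in nhdsWithin x (Set.Ioi x), z < x + 1 := by
      apply eventually_nhdsWithin_of_eventually_nhds
      exact Filter.Tendsto.eventually_lt_const (by linarith) Filter.tendsto_id
    refine ((hev1.and (hev2.and hev3)).mono ?_).frequently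
    rintro z ⟨hz1, hz2, hz3⟩
    have hzx : x < z := hz2
    set h : ℝ := z - x with hh
    have hhpos : 0 < h := by simp [hh]; linarith
    have hh1 : h < 1 := by simp [hh]; linarith
    -- the projection point
    obtain ⟨q, hqR, hq⟩ := hRclosed.exists_infDist_eq_dist hRne (θ x)
    -- convex combination lies in R
    have hpR : (1 - h) • q + h • (r x) ∈ R :=
      hRconvex hqR (hrmem x hx0) (by linarith) (le_of_lt hhpos) (by ring)
    have key : f z ≤ c * h + (1 - h) * f x := by
      have h1 : f z ≤ dist (θ z) ((1 - h) • q + h • (r x)) :=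
        Metric.infDist_le_dist_of_mem hpR
      have h2 : dist (θ z) ((1 - h) • q + h • (r x)) ≤
          dist (θ z) (θ x + h • (r x - θ x)) +
            dist (θ x + h • (r x - θ x)) ((1 - h) • q + h • (r x)) :=
        dist_triangle _ _ _
      have h3 : dist (θ z) (θ x + h • (r x - θ x)) ≤ c * h := by
        rw [dist_eq_norm]
        have : θ z - (θ x + h • (r x - θ x)) = θ z - θ x - (z - x) • (r x - θ x) := by
          rw [← hh]; abel
        rw [this]
        calc ‖θ z - θ x - (z - x) • (r x - θ x)‖ ≤ c * ‖z - x‖ := hz1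
          _ = c * h := by rw [← hh, Real.norm_eq_abs, abs_of_pos hhpos]
      have h4 : dist (θ x + h • (r x - θ x)) ((1 - h) • q + h • (r x)) = (1 - h) * f x := by
        rw [dist_eq_norm]
        have : θ x + h • (r x - θ x) - ((1 - h) • q + h • (r x)) = (1 - h) • (θ x - q) := by
          module
        rw [this, norm_smul, Real.norm_eq_abs, abs_of_pos (by linarith : (0:ℝ) < 1 - h)]
        rw [hfdef]
        simp only
        rw [hq, dist_eq_norm]
      linarith
    have : (z - x)⁻¹ * (f z - f x) ≤ c - f x := by
      rw [← hh, inv_mul_le_iff₀ hhpos]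
      nlinarith [key]
    have hlt : c - f x < r' := by simp only [hc]; linarith
    linarith
  have hbound : ∀ x ∈ Set.Ico 0 t, (fun s => -f s) x ≤ (-1) * f x + 0 := by
    intro x _; simp
  have := le_gronwallBound_of_liminf_deriv_right_le hcontf hslope
    (le_refl (f 0)) hbound t (Set.mem_Icc.2 ⟨ht', le_refl t⟩)
  rwa [gronwallBound_ε0, sub_zero, neg_one_mul] at this
end

section
/- Let R̄ be a nonempty compact convex subset of the nonnegative orthant of ℝ^M, let U : ℝ^M → ℝ be concave and continuously differentiable on an open convex set containing the nonnegative orthant, and let ν ∈ ℝ^M with ν ≥ 0. Let θ∞ be a maximizer of r ↦ U(r) + νᵀ r over R̄. Then for every θ in the nonnegative orthant of ℝ^M and every maximizer r̂ of the linear functional r ↦ (∇U(θ) + ν)ᵀ r over R̄, the following inequality holds: (∇U(θ) + ν)ᵀ (r̂ − θ) ≥ (U(θ∞) + νᵀ θ∞) − (U(θ) + νᵀ θ). -/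
/-!
Restricting a concave differentiable `U` to the segment from `θ` to `θ∞` gives the first-order
bound `U θ∞ ≤ U θ + ⟪∇U θ, θ∞ - θ⟫`. Adding `⟪ν, θ∞ - θ⟫` and using that `r̂` maximizes
`⟪∇U θ + ν, ·⟫` over `R̄ ∋ θ∞` gives the claim.
-/

open scoped RealInnerProductSpace

theorem ConcaveOn.le_add_of_hasFDerivAt {E : Type*} [NormedAddCommGroup E] [NormedSpace ℝ E]
    {s : Set E} {f : E → ℝ} {f' : E →L[ℝ] ℝ} {x y : E}
    (hf : ConcaveOn ℝ s f) (hx : x ∈ s) (hy : y ∈ s) (hf' : HasFDerivAt f f' x) :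
    f y ≤ f x + f' (y - x) := by
  let L : ℝ →ᵃ[ℝ] E := AffineMap.lineMap x y
  have hL0 : L 0 = x := AffineMap.lineMap_apply_zero x y
  have hL1 : L 1 = y := AffineMap.lineMap_apply_one x y
  have hconc : ConcaveOn ℝ (L ⁻¹' s) (f ∘ L) := hf.comp_affineMap L
  have hderiv : HasDerivAt (f ∘ L) (f' (y - x)) 0 :=
    (hL0 ▸ hf').comp_hasDerivAt (0 : ℝ) AffineMap.hasDerivAt_lineMap
  have hslope := hconc.slope_le_of_hasDerivAt (by simpa [hL0]) (by simpa [hL1]) one_pos hderiv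
  rw [slope_def_field] at hslope
  simp only [Function.comp_apply, hL0, hL1, sub_zero, div_one] at hslope
  linarith

theorem ConcaveOn.le_add_inner_of_hasGradientAt {E : Type*} [NormedAddCommGroup E]
    [InnerProductSpace ℝ E] [CompleteSpace E] {s : Set E} {f : E → ℝ} {g x y : E}
    (hf : ConcaveOn ℝ s f) (hx : x ∈ s) (hy : y ∈ s) (hg : HasGradientAt f g x) :
    f y ≤ f x + ⟪g, y - x⟫ :=
  hf.le_add_of_hasFDerivAt hx hy hg.hasFDerivAt

theorem stmt_6_general {M : ℕ}
    (R : Set (EuclideanSpace ℝ (Fin M)))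
    (hRpos : ∀ r ∈ R, ∀ i, 0 ≤ r i)
    (V : Set (EuclideanSpace ℝ (Fin M)))
    (hVopen : IsOpen V)
    (hVsub : {x : EuclideanSpace ℝ (Fin M) | ∀ i, 0 ≤ x i} ⊆ V)
    (U : EuclideanSpace ℝ (Fin M) → ℝ)
    (hUconc : ConcaveOn ℝ V U) (hUsmooth : ContDiffOn ℝ 1 U V)
    (ν : EuclideanSpace ℝ (Fin M))
    (θinf : EuclideanSpace ℝ (Fin M)) (hθinfmem : θinf ∈ R)
    (θ : EuclideanSpace ℝ (Fin M)) (hθ : ∀ i, 0 ≤ θ i)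
    (rhat : EuclideanSpace ℝ (Fin M))
    (hrhatmax : IsMaxOn (fun r => ⟪gradient U θ + ν, r⟫) R rhat) :
    (U θinf + ⟪ν, θinf⟫) - (U θ + ⟪ν, θ⟫) ≤ ⟪gradient U θ + ν, rhat - θ⟫ := by
  have hθV : θ ∈ V := hVsub hθ
  have hdiff : DifferentiableAt ℝ U θ :=
    (hUsmooth.contDiffAt (hVopen.mem_nhds hθV)).differentiableAt one_ne_zero
  have hfirst : U θinf ≤ U θ + ⟪gradient U θ, θinf - θ⟫ :=
    hUconc.le_add_inner_of_hasGradientAt hθV (hVsub (hRpos θinf hθinfmem)) hdiff.hasGradientAt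
  have hlin : ⟪gradient U θ + ν, θinf⟫ ≤ ⟪gradient U θ + ν, rhat⟫ := hrhatmax hθinfmem
  simp only [inner_add_left, inner_sub_right] at hfirst hlin ⊢
  linarith

/-- Lyapunov inequality: for any `θ` in the nonnegative orthant and any maximizer `r̂` of the
linear functional `r ↦ ⟪∇U(θ) + ν, r⟫` over `R̄`, the drift `⟪∇U(θ) + ν, r̂ − θ⟫` dominates
the optimality gap of the function `r ↦ U(r) + ⟪ν, r⟫`. -/
theorem stmt_6 {M : ℕ}
    (R : Set (EuclideanSpace ℝ (Fin M)))
    (hRne : R.Nonempty) (hRcompact : IsCompact R) (hRconvex : Convex ℝ R)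
    (hRpos : ∀ r ∈ R, ∀ i, 0 ≤ r i)
    (V : Set (EuclideanSpace ℝ (Fin M)))
    (hVopen : IsOpen V) (hVconvex : Convex ℝ V)
    (hVsub : {x : EuclideanSpace ℝ (Fin M) | ∀ i, 0 ≤ x i} ⊆ V)
    (U : EuclideanSpace ℝ (Fin M) → ℝ)
    (hUconc : ConcaveOn ℝ V U) (hUsmooth : ContDiffOn ℝ 1 U V)
    (ν : EuclideanSpace ℝ (Fin M)) (hν : ∀ i, 0 ≤ ν i)
    (θinf : EuclideanSpace ℝ (Fin M)) (hθinfmem : θinf ∈ R)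
    (hθinfmax : IsMaxOn (fun r => U r + ⟪ν, r⟫) R θinf)
    (θ : EuclideanSpace ℝ (Fin M)) (hθ : ∀ i, 0 ≤ θ i)
    (rhat : EuclideanSpace ℝ (Fin M)) (hrhatmem : rhat ∈ R)
    (hrhatmax : IsMaxOn (fun r => ⟪gradient U θ + ν, r⟫) R rhat) :
    (U θinf + ⟪ν, θinf⟫) - (U θ + ⟪ν, θ⟫) ≤ ⟪gradient U θ + ν, rhat - θ⟫ :=
  stmt_6_general R hRpos V hVopen hVsub U hUconc hUsmooth ν θinf hθinfmem θ hθ rhat hrhatmax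
end
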